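/- Let n ≥ 2 and let f be a fixed-point-free involution on ZMod (2n) such that f a = b + 1 and f (a+1) = b, where a, a+1, b, b+1 are four pairwise distinct points. Then every chord d distinct from c₁ = {a, b+1} and c₂ = {a+1, b} is linked with c₁ if and only if it is linked with c₂; consequently c₁ and c₂ have the same Gaussian parity. (This verifies parity axiom 2 for the Gaussian parity: the two crossings involved in a second Reidemeister move have the same parity.) -/

import Mathlib

/-!
The open arc of `c₁ = {a, b+1}` is the arc `a+1, …, b` and that of `c₂ = {a+1, b}` is
`a+2, …, b-1`: they differ exactly by the two endpoints of `c₂`. Hence a chord other than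
`c₂` meets the two arcs in the same points, while `c₂` itself is linked with neither
(both of its endpoints lie in the arc of `c₁`). So `c₁` and `c₂` are linked with exactly
the same chords.
-/

/-- The open arc from `u` to `v` on the cyclic set `ZMod N`: the points
`u+1, u+2, …, v-1` reached from `u` by repeatedly adding `1` before reaching `v`. -/
def openArc {N : ℕ} (u v : ZMod N) : Set (ZMod N) :=
  {w | 0 < (w - u).val ∧ (w - u).val < (v - u).val}

/-- For a chord diagram given by the fixed-point-free involution `f`, the chord
`{b, f b}` is linked with the chord `{a, f a}` if exactly one of `b`, `f b`
lies in the open arc from `a` to `f a`. -/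
def Linked {N : ℕ} (f : ZMod N → ZMod N) (a b : ZMod N) : Prop :=
  Xor' (b ∈ openArc a (f a)) (f b ∈ openArc a (f a))

/-- The number of chords of the chord diagram `f` linked with the chord `{a, f a}`. -/
noncomputable def linkedCount {N : ℕ} (f : ZMod N → ZMod N) (a : ZMod N) : ℕ :=
  Set.ncard {d : Set (ZMod N) | ∃ b, d = {b, f b} ∧ Linked f a b}

/-- The chord `{a, f a}` is Gaussian-even: the number of chords linked with it is even. -/
def GaussEven {N : ℕ} (f : ZMod N → ZMod N) (a : ZMod N) : Prop :=
  Even (linkedCount f a)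

namespace ZMod

variable {N : ℕ} [NeZero N]

theorem val_add_one_of_ne_neg_one {z : ZMod N} (hz : z ≠ -1) : (z + 1).val = z.val + 1 := by
  have hcast : z + 1 = ((z.val + 1 : ℕ) : ZMod N) := by push_cast [natCast_zmod_val]; rfl
  rw [hcast, val_cast_of_lt]
  by_contra hle
  have hN : z.val + 1 = N := le_antisymm (Nat.succ_le_of_lt z.val_lt) (not_lt.1 hle)
  exact hz (eq_neg_of_add_eq_zero_left (by rw [hcast, hN, natCast_self]))

theorem val_sub_one_of_ne_zero {z : ZMod N} (hz : z ≠ 0) : (z - 1).val = z.val - 1 := by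
  have h := val_add_one_of_ne_neg_one (z := z - 1) (by simpa [sub_eq_neg_self] using hz)
  rw [sub_add_cancel] at h
  omega

theorem val_neg_one_eq : (-1 : ZMod N).val = N - 1 := by
  obtain ⟨k, rfl⟩ := Nat.exists_eq_succ_of_ne_zero (NeZero.ne N)
  simp [val_neg_one k]

end ZMod

theorem openArc_add_one_right {N : ℕ} [NeZero N] {u v : ZMod N} (huv : u ≠ v)
    (hvu : v + 1 ≠ u) :
    openArc u (v + 1) = insert (u + 1) (insert v (openArc (u + 1) v)) := by
  have : Fact (1 < N) := ⟨Nat.one_lt_iff_ne_zero_and_ne_one.2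
    ⟨NeZero.ne N, fun h => by subst h; exact huv (Subsingleton.elim u v)⟩⟩
  ext w
  obtain ⟨z, rfl⟩ : ∃ z, w = u + z := ⟨w - u, by ring⟩
  obtain ⟨t, rfl⟩ : ∃ t, v = u + t := ⟨v - u, by ring⟩
  have ht : t ≠ 0 := by simpa using huv
  have ht' : t ≠ -1 := fun h => hvu (by rw [h]; ring)
  have hz1 : u + z = u + 1 ↔ z.val = 1 := by
    rw [add_right_inj, ← ZMod.val_one N, (ZMod.val_injective N).eq_iff]
  have hzt : u + z = u + t ↔ z.val = t.val := by
    rw [add_right_inj, (ZMod.val_injective N).eq_iff]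
  have hz_pred : (z - 1).val = if z = 0 then N - 1 else z.val - 1 := by
    split_ifs with hz
    · rw [hz, zero_sub, ZMod.val_neg_one_eq]
    · exact ZMod.val_sub_one_of_ne_zero hz
  have hzt_lt := t.val_lt
  simp only [openArc, Set.mem_insert_iff, Set.mem_ofPred_eq, hz1, hzt,
    show u + z - u = z by ring, show u + t + 1 - u = t + 1 by ring,
    show u + z - (u + 1) = z - 1 by ring, show u + t - (u + 1) = t - 1 by ring,
    ZMod.val_add_one_of_ne_neg_one ht', ZMod.val_sub_one_of_ne_zero ht, hz_pred]
  have ht_pos : 0 < t.val := ZMod.val_pos.2 ht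
  split_ifs with hz
  · simp only [hz, ZMod.val_zero]
    omega
  · have := ZMod.val_pos.2 hz
    omega

theorem linked_iff_xor {N : ℕ} {f : ZMod N → ZMod N} {a b : ZMod N} :
    Linked f a b ↔ Xor (b ∈ openArc a (f a)) (f b ∈ openArc a (f a)) :=
  Iff.rfl

theorem not_linked_self {N : ℕ} (f : ZMod N → ZMod N) (a : ZMod N) : ¬Linked f a a := by
  simp [linked_iff_xor, openArc]

theorem linked_apply_iff {N : ℕ} {f : ZMod N → ZMod N} (hf : Function.Involutive f)
    (a x : ZMod N) : Linked f a (f x) ↔ Linked f a x := by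
  rw [linked_iff_xor, linked_iff_xor, hf x, xor_comm]

theorem linked_iff_linked_add_one {N : ℕ} [NeZero N] {f : ZMod N → ZMod N}
    (hf : Function.Involutive f) {a b : ZMod N} (h1 : f a = b + 1) (h2 : f (a + 1) = b)
    (hab : a ≠ b) (hba : b + 1 ≠ a) (x : ZMod N) : Linked f a x ↔ Linked f (a + 1) x := by
  have harc : openArc a (f a) = insert (a + 1) (insert b (openArc (a + 1) (f (a + 1)))) := by
    rw [h1, h2]
    exact openArc_add_one_right hab hba
  have hfb : f b = a + 1 := by rw [← h2, hf]
  have hc₂ : ¬Linked f a (a + 1) := by simp [linked_iff_xor, harc, h2]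
  by_cases hx : x = a + 1 ∨ f x = a + 1
  · obtain rfl | hx := hx
    · simp only [hc₂, not_linked_self]
    · rw [← linked_apply_iff hf a x, hx, ← linked_apply_iff hf (a + 1) x, hx]
      simp only [hc₂, not_linked_self]
  · push Not at hx
    have hxb : x ≠ b := fun h => hx.2 (h ▸ hfb)
    have hfxb : f x ≠ b := fun h => hx.1 (by rw [← hf x, h, hfb])
    simp only [linked_iff_xor, harc, Set.mem_insert_iff, hx.1, hx.2, hxb, hfxb, false_or]

theorem second_reidemeister_same_parity_general (n : ℕ) (hn : 2 ≤ n)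
    (f : ZMod (2 * n) → ZMod (2 * n))
    (hinv : Function.Involutive f)
    (a b : ZMod (2 * n)) (h1 : f a = b + 1) (h2 : f (a + 1) = b)
    (hdist : [a, a + 1, b, b + 1].Pairwise (· ≠ ·)) :
    (∀ x, ({x, f x} : Set (ZMod (2 * n))) ≠ {a, b + 1} →
        ({x, f x} : Set (ZMod (2 * n))) ≠ {a + 1, b} →
        (Linked f a x ↔ Linked f (a + 1) x)) ∧
    (GaussEven f a ↔ GaussEven f (a + 1)) := by
  have : NeZero (2 * n) := ⟨by omega⟩
  have hab : a ≠ b := (List.pairwise_cons.1 hdist).1 b (by simp)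
  have hba : b + 1 ≠ a := ((List.pairwise_cons.1 hdist).1 (b + 1) (by simp)).symm
  have key := linked_iff_linked_add_one hinv h1 h2 hab hba
  exact ⟨fun x _ _ => key x, by simp only [GaussEven, linkedCount, key]⟩

/-- For two parallel chords `c₁ = {a, b+1}`, `c₂ = {a+1, b}` (the two crossings involved
in a second Reidemeister move), every other chord is linked with `c₁` iff it is linked
with `c₂`; consequently `c₁` and `c₂` have the same Gaussian parity. -/
theorem second_reidemeister_same_parity (n : ℕ) (hn : 2 ≤ n)
    (f : ZMod (2 * n) → ZMod (2 * n))
    (hinv : Function.Involutive f) (hfpf : ∀ x, f x ≠ x)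
    (a b : ZMod (2 * n)) (h1 : f a = b + 1) (h2 : f (a + 1) = b)
    (hdist : [a, a + 1, b, b + 1].Pairwise (· ≠ ·)) :
    (∀ x, ({x, f x} : Set (ZMod (2 * n))) ≠ {a, b + 1} →
        ({x, f x} : Set (ZMod (2 * n))) ≠ {a + 1, b} →
        (Linked f a x ↔ Linked f (a + 1) x)) ∧
    (GaussEven f a ↔ GaussEven f (a + 1)) :=
  second_reidemeister_same_parity_general n hn f hinv a b h1 h2 hdist
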